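/- arXiv:1507.06853 — 3 statements merged into one kernel-verified Lean document; each statement's English description precedes it below -/
import Mathlib

section
/- Let d ∈ ℕ and let f: ℝ^d → ℝ be supported in an axis-parallel cube of edge length l > 0. Then for any invertible matrix S ∈ ℝ^{d×d}, any v ∈ ℝ^d and any a ≥ 1, the quadrature rule Q_{aS,v} uses at most (l·‖S‖₁ + 1)^d · a^d function values of f; that is, the number of m ∈ ℤ^d with (aS)^{−⊤}(m+v) ∈ supp f is at most (l·‖S‖₁ + 1)^d · a^d, where ‖S‖₁ denotes the operator norm of S with respect to the ℓ¹-norm (maximal absolute column sum). -/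
open MeasureTheory Matrix Real Set
noncomputable section

/-- integer lattice point as a real vector -/
def zvec {d : ℕ} (m : Fin d → ℤ) : Fin d → ℝ := fun j => (m j : ℝ)

/-- The quadrature rule `Q_{S,v}(f) = |det S|⁻¹ ∑_{m ∈ ℤᵈ} f (S⁻ᵀ (m + v))`. -/
def Qrule {d : ℕ} (S : Matrix (Fin d) (Fin d) ℝ) (v : Fin d → ℝ)
    (f : (Fin d → ℝ) → ℝ) : ℝ :=
  |S.det|⁻¹ * ∑' m : Fin d → ℤ, f ((Sᵀ)⁻¹ *ᵥ (zvec m + v))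

/-- A Frolov matrix. -/
def IsFrolov {d : ℕ} (B : Matrix (Fin d) (Fin d) ℝ) : Prop :=
  IsUnit B.det ∧
  (∀ m : Fin d → ℤ, m ≠ 0 → 1 ≤ |∏ j, (B *ᵥ zvec m) j|) ∧
  (∀ x y : Fin d → ℝ,
    {m : Fin d → ℤ | ∀ j, (B *ᵥ zvec m) j ∈ Set.uIcc (x j) (y j)}.Finite ∧
    ({m : Fin d → ℤ | ∀ j, (B *ᵥ zvec m) j ∈ Set.uIcc (x j) (y j)}.ncard : ℝ)
      ≤ (∏ j, |x j - y j|) + 1)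

/-- the unit cube `[0,1]^d` -/
def unitCube (d : ℕ) : Set (Fin d → ℝ) := Set.univ.pi fun _ => Set.Icc 0 1

/-- the box `[1, 2^{1/d}]^d` for the dilation parameter -/
def uBox (d : ℕ) : Set (Fin d → ℝ) := Set.univ.pi fun _ => Set.Icc 1 (2 ^ ((1 : ℝ) / d))

/-- uniform probability measure on a set -/
def unif {d : ℕ} (s : Set (Fin d → ℝ)) : Measure (Fin d → ℝ) :=
  (volume s)⁻¹ • volume.restrict s

/-- joint distribution of the random dilation `u` and the random shift `v` -/
def Pmeas (d : ℕ) : Measure ((Fin d → ℝ) × (Fin d → ℝ)) :=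
  (unif (uBox d)).prod (unif (unitCube d))

/-- the random matrix `a ū B` of the randomized Frolov rule -/
def Mmat {d : ℕ} (a : ℝ) (B : Matrix (Fin d) (Fin d) ℝ) (u : Fin d → ℝ) :
    Matrix (Fin d) (Fin d) ℝ :=
  a • (Matrix.diagonal u * B)

/-- the Fourier transform `f̂(y) = ∫ f(x) e^{-2πi⟨x,y⟩} dx` -/
def ft {d : ℕ} (f : (Fin d → ℝ) → ℝ) (y : Fin d → ℝ) : ℂ :=
  ∫ x : Fin d → ℝ, (f x : ℂ) *
    Complex.exp (-2 * (π : ℂ) * Complex.I * ((∑ j, x j * y j : ℝ) : ℂ))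

/-- `D_a = {x : ∏ |x_j| ≥ a^d}` -/
def Da (d : ℕ) (a : ℝ) : Set (Fin d → ℝ) := {x | a ^ d ≤ ∏ j, |x j|}

/-- partial derivative in the `i`-th coordinate -/
def pd {d : ℕ} (i : Fin d) (f : (Fin d → ℝ) → ℝ) : (Fin d → ℝ) → ℝ :=
  fun x => deriv (fun t => f (Function.update x i t)) (x i)

/-- the mixed partial derivative `D^α f` for a multi-index `α` -/
def Dmulti {d : ℕ} (α : Fin d → ℕ) (f : (Fin d → ℝ) → ℝ) : (Fin d → ℝ) → ℝ :=
  (List.finRange d).foldr (fun i g => (pd i)^[α i] g) f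

/-- multi-indices `α ∈ {0,…,r}^d` -/
def mixIdx (d r : ℕ) : Finset (Fin d → ℕ) := Fintype.piFinset fun _ => Finset.range (r + 1)

/-- multi-indices `α ∈ ℕ₀^d` with `‖α‖₁ ≤ s` -/
def isoIdx (d s : ℕ) : Finset (Fin d → ℕ) :=
  (Fintype.piFinset fun _ => Finset.range (s + 1)).filter fun α => ∑ j, α j ≤ s

/-- the weight `h_r(x) = ∏_j ∑_{k=0}^r |2πx_j|^{2k}` -/
def hwt (d r : ℕ) (x : Fin d → ℝ) : ℝ :=
  ∏ j, ∑ k ∈ Finset.range (r + 1), |2 * π * x j| ^ (2 * k)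

/-- the weight `v_s(x) = ∑_{‖α‖₁ ≤ s} ∏_j |2πx_j|^{2α_j}` -/
def vwt (d s : ℕ) (x : Fin d → ℝ) : ℝ :=
  ∑ α ∈ isoIdx d s, ∏ j, |2 * π * x j| ^ (2 * α j)

/-- the `H^{r,mix}(ℝ^d)` norm, in its Fourier-analytic form -/
def mixNormF (d r : ℕ) (f : (Fin d → ℝ) → ℝ) : ℝ :=
  Real.sqrt (∫ x : Fin d → ℝ, ‖ft f x‖ ^ 2 * hwt d r x)

/-- the `H^s(ℝ^d)` norm, in its Fourier-analytic form -/
def isoNormF (d s : ℕ) (f : (Fin d → ℝ) → ℝ) : ℝ :=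
  Real.sqrt (∫ x : Fin d → ℝ, ‖ft f x‖ ^ 2 * vwt d s x)

/-- the `H^{r,mix}([0,1]^d)` norm -/
def mixNormC (d r : ℕ) (f : (Fin d → ℝ) → ℝ) : ℝ :=
  Real.sqrt (∑ α ∈ mixIdx d r, ∫ x in unitCube d, (Dmulti α f x) ^ 2)

/-- the `H^s([0,1]^d)` norm -/
def isoNormC (d s : ℕ) (f : (Fin d → ℝ) → ℝ) : ℝ :=
  Real.sqrt (∑ α ∈ isoIdx d s, ∫ x in unitCube d, (Dmulti α f x) ^ 2)

/-- the coordinatewise transformation `Ψ` -/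
def PsiMap (ψ : ℝ → ℝ) {d : ℕ} (x : Fin d → ℝ) : Fin d → ℝ := fun j => ψ (x j)

/-- the Jacobian `|DΨ(x)| = ∏_j ψ'(x_j)` -/
def DPsi (ψ : ℝ → ℝ) {d : ℕ} (x : Fin d → ℝ) : ℝ := ∏ j, deriv ψ (x j)

/-- the transformed quadrature rule `Q̃_{S,v}` -/
def Qt (ψ : ℝ → ℝ) {d : ℕ} (S : Matrix (Fin d) (Fin d) ℝ) (v : Fin d → ℝ)
    (f : (Fin d → ℝ) → ℝ) : ℝ :=
  |S.det|⁻¹ * ∑' m : Fin d → ℤ,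
    f (PsiMap ψ ((Sᵀ)⁻¹ *ᵥ (zvec m + v))) * DPsi ψ ((Sᵀ)⁻¹ *ᵥ (zvec m + v))

/-- the standing assumptions on the transformation `ψ` -/
def IsPsi (ψ : ℝ → ℝ) : Prop :=
  ContDiff ℝ (⊤ : ℕ∞) ψ ∧ (∀ x < (0 : ℝ), ψ x = 0) ∧ (∀ x > (1 : ℝ), ψ x = 1) ∧
  Set.BijOn ψ (Set.Ioo 0 1) (Set.Ioo 0 1) ∧
  ∀ x ∈ Set.Ioo (0 : ℝ) 1, deriv ψ x ≠ 0

/-- the operator norm of `S` with respect to the `ℓ¹`-norm: maximal absolute column sum -/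
def colNorm {d : ℕ} (S : Matrix (Fin d) (Fin d) ℝ) : ℝ := ⨆ j, ∑ i, |S i j|

lemma icc_card_le_aux (α β : ℝ) (h : α ≤ β) :
    ((Finset.Icc ⌈α⌉ ⌊β⌋).card : ℝ) ≤ β - α + 1 := by
  rw [Int.card_Icc]
  rcases le_or_gt (⌊β⌋ + 1 - ⌈α⌉) 0 with h0 | h0
  · rw [Int.toNat_of_nonpos h0]
    push_cast
    linarith
  · have hcast : (((⌊β⌋ + 1 - ⌈α⌉).toNat : ℤ) : ℝ) ≤ β - α + 1 := by
      rw [Int.toNat_of_nonneg h0.le]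
      have h1 := Int.floor_le β
      have h2 := Int.le_ceil α
      push_cast
      linarith
    exact_mod_cast hcast

/-- Lemma 1: if `f` is supported in an axis-parallel cube of edge
length `l`, the rule `Q_{aS,v}` uses at most `(l‖S‖₁ + 1)^d a^d` function values. -/
theorem stmt0 (d : ℕ) (hd : 0 < d) (f : (Fin d → ℝ) → ℝ) (l : ℝ) (hl : 0 < l)
    (x₀ : Fin d → ℝ)
    (hsupp : Function.support f ⊆ Set.univ.pi fun j => Set.Icc (x₀ j) (x₀ j + l))
    (S : Matrix (Fin d) (Fin d) ℝ) (hS : IsUnit S.det) (v : Fin d → ℝ)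
    (a : ℝ) (ha : 1 ≤ a) :
    {m : Fin d → ℤ | ((a • S)ᵀ)⁻¹ *ᵥ (zvec m + v) ∈ Function.support f}.Finite ∧
    ({m : Fin d → ℤ | ((a • S)ᵀ)⁻¹ *ᵥ (zvec m + v) ∈ Function.support f}.ncard : ℝ)
      ≤ (l * colNorm S + 1) ^ d * a ^ d := by
  have ha0 : (0:ℝ) < a := lt_of_lt_of_le one_pos ha
  set M := (a • S)ᵀ with hMdef
  have hMdet : IsUnit M.det := by
    rw [hMdef, Matrix.det_transpose, Matrix.det_smul, Fintype.card_fin]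
    exact (isUnit_iff_ne_zero.mpr (pow_ne_zero d ha0.ne')).mul hS
  set c : Fin d → ℝ := fun j => a * ∑ i, S i j * (x₀ i + l / 2) - v j with hc
  set R : Fin d → ℝ := fun j => a * (l / 2) * ∑ i, |S i j| with hR
  have hRnn : ∀ j, 0 ≤ R j := fun j =>
    mul_nonneg (mul_nonneg ha0.le (by linarith)) (Finset.sum_nonneg fun i _ => abs_nonneg _)
  have hkey : ∀ m : Fin d → ℤ, M⁻¹ *ᵥ (zvec m + v) ∈ Function.support f →
      ∀ j, |(m j : ℝ) - c j| ≤ R j := by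
    intro m hm j
    set x := M⁻¹ *ᵥ (zvec m + v) with hxdef
    have hx : x ∈ Set.univ.pi fun j => Set.Icc (x₀ j) (x₀ j + l) := hsupp hm
    have h1 : M *ᵥ x = zvec m + v := by
      rw [hxdef, Matrix.mulVec_mulVec, Matrix.mul_nonsing_inv _ hMdet, Matrix.one_mulVec]
    have h2 : (m j : ℝ) + v j = ∑ i, a * S i j * x i := by
      have := congrFun h1 j
      rw [hMdef] at this
      simp only [Matrix.mulVec, dotProduct, Matrix.transpose_apply, Matrix.smul_apply,
        smul_eq_mul, Pi.add_apply, zvec] at this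
      rw [← this]
    have h3 : (m j : ℝ) - c j = ∑ i, a * S i j * (x i - (x₀ i + l / 2)) := by
      have h4 : a * ∑ i, S i j * (x₀ i + l / 2) = ∑ i, a * S i j * (x₀ i + l / 2) := by
        rw [Finset.mul_sum]; exact Finset.sum_congr rfl fun i _ => by ring
      have h5 : ∑ i, a * S i j * (x i - (x₀ i + l / 2))
          = (∑ i, a * S i j * x i) - ∑ i, a * S i j * (x₀ i + l / 2) := by
        rw [← Finset.sum_sub_distrib]
        exact Finset.sum_congr rfl fun i _ => by ring
      rw [h5, ← h2]
      simp only [hc]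
      linarith [h4]
    calc |(m j : ℝ) - c j| = |∑ i, a * S i j * (x i - (x₀ i + l / 2))| := by rw [h3]
      _ ≤ ∑ i, |a * S i j * (x i - (x₀ i + l / 2))| := Finset.abs_sum_le_sum_abs _ _
      _ ≤ ∑ i, a * |S i j| * (l / 2) := by
          refine Finset.sum_le_sum fun i _ => ?_
          have hxi := hx i (Set.mem_univ i)
          simp only [Set.mem_Icc] at hxi
          have habs : |x i - (x₀ i + l / 2)| ≤ l / 2 :=
            abs_le.mpr ⟨by linarith [hxi.1], by linarith [hxi.2]⟩
          rw [abs_mul, abs_mul, abs_of_pos ha0]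
          exact mul_le_mul_of_nonneg_left habs
            (mul_nonneg ha0.le (abs_nonneg _))
      _ = R j := by
          simp only [hR, Finset.mul_sum]
          exact Finset.sum_congr rfl fun i _ => by ring
  set F : Finset (Fin d → ℤ) :=
    Fintype.piFinset fun j => Finset.Icc ⌈c j - R j⌉ ⌊c j + R j⌋ with hF
  have hsub : {m : Fin d → ℤ | M⁻¹ *ᵥ (zvec m + v) ∈ Function.support f} ⊆ ↑F := by
    intro m hm
    rw [Finset.mem_coe, hF, Fintype.mem_piFinset]
    intro j
    have h := abs_le.mp (hkey m hm j)
    rw [Finset.mem_Icc, Int.ceil_le, Int.le_floor]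
    exact ⟨by linarith [h.1], by linarith [h.2]⟩
  have hfin : {m : Fin d → ℤ | M⁻¹ *ᵥ (zvec m + v) ∈ Function.support f}.Finite :=
    F.finite_toSet.subset hsub
  refine ⟨hfin, ?_⟩
  have hcol : ∀ j : Fin d, ∑ i, |S i j| ≤ colNorm S := by
    intro j
    unfold colNorm
    exact le_ciSup (f := fun j => ∑ i, |S i j|) (Set.Finite.bddAbove (Set.finite_range _)) j
  have hbound : ∀ j : Fin d,
      ((Finset.Icc ⌈c j - R j⌉ ⌊c j + R j⌋).card : ℝ) ≤ (l * colNorm S + 1) * a := by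
    intro j
    have h1 := icc_card_le_aux (c j - R j) (c j + R j) (by linarith [hRnn j])
    have h2 : c j + R j - (c j - R j) + 1 = 2 * R j + 1 := by ring
    rw [h2] at h1
    have h3 : 2 * R j = a * l * ∑ i, |S i j| := by rw [hR]; ring
    have h4 : a * l * ∑ i, |S i j| ≤ a * l * colNorm S :=
      mul_le_mul_of_nonneg_left (hcol j) (mul_nonneg ha0.le hl.le)
    have h5 : a * l * colNorm S + a = (l * colNorm S + 1) * a := by ring
    have hC : 0 ≤ colNorm S :=
      le_trans (Finset.sum_nonneg fun i _ => abs_nonneg _) (hcol ⟨0, hd⟩)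
    linarith
  calc ({m : Fin d → ℤ | M⁻¹ *ᵥ (zvec m + v) ∈ Function.support f}.ncard : ℝ)
      ≤ (F.card : ℝ) := by
        rw [← Set.ncard_coe_finset]
        exact_mod_cast Set.ncard_le_ncard hsub F.finite_toSet
    _ = ∏ j, ((Finset.Icc ⌈c j - R j⌉ ⌊c j + R j⌋).card : ℝ) := by
        rw [hF, Fintype.card_piFinset]; push_cast; rfl
    _ ≤ ∏ _j : Fin d, (l * colNorm S + 1) * a :=
        Finset.prod_le_prod (fun j _ => Nat.cast_nonneg _) (fun j _ => hbound j)
    _ = ((l * colNorm S + 1) * a) ^ d := by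
        rw [Finset.prod_const, Finset.card_univ, Fintype.card_fin]
    _ = (l * colNorm S + 1) ^ d * a ^ d := mul_pow _ _ _
end
end

section
/- Let d ∈ ℕ, B ∈ ℝ^{d×d} a Frolov matrix and a > 0. For every f ∈ L¹(ℝ^d) one has E_u E_v |Q_{aūB,v}(f)| ≤ ∫_{ℝ^d} |f(y)| dy < ∞ (so M_{a,B}(f) is almost surely finite) and E(M_{a,B}(f)) = ∫_{ℝ^d} f(y) dy; that is, the randomized Frolov quadrature M_{a,B} is well-defined and unbiased on L¹(ℝ^d). -/
open MeasureTheory Matrix Real Set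
noncomputable section

open scoped ENNReal

/-! ### Auxiliary lemmas -/

section Aux

lemma measure_unitCube (d : ℕ) : volume (unitCube d) = 1 := by
  rw [unitCube, volume_pi_pi]
  simp [Real.volume_Icc]

lemma unif_unitCube (d : ℕ) : unif (unitCube d) = volume.restrict (unitCube d) := by
  rw [unif, measure_unitCube]; simp

lemma measure_uBox (d : ℕ) (hd : 0 < d) :
    volume (uBox d) ≠ 0 ∧ volume (uBox d) ≠ ⊤ := by
  have h1 : (1:ℝ) < 2 ^ ((1:ℝ)/d) := by
    have hpos : (0:ℝ) < 1/d := by positivity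
    rw [Real.one_lt_rpow_iff_of_pos (by norm_num)]
    exact Or.inl ⟨one_lt_two, hpos⟩
  rw [uBox, volume_pi_pi]
  simp only [Real.volume_Icc, Finset.prod_const]
  constructor
  · apply pow_ne_zero
    rw [ne_eq, ENNReal.ofReal_eq_zero, not_le]
    linarith
  · exact ENNReal.pow_ne_top ENNReal.ofReal_ne_top

lemma unif_prob (d : ℕ) {s : Set (Fin d → ℝ)} (h0 : volume s ≠ 0) (ht : volume s ≠ ⊤) :
    IsProbabilityMeasure (unif s) := by
  constructor
  rw [unif, Measure.smul_apply, Measure.restrict_apply_univ, smul_eq_mul,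
    ENNReal.inv_mul_cancel h0 ht]

instance unif_prob_cube (d : ℕ) : IsProbabilityMeasure (unif (unitCube d)) := by
  constructor
  rw [unif_unitCube, Measure.restrict_apply_univ, measure_unitCube]

lemma restrict_unitCube_eq (d : ℕ) :
    volume.restrict (unitCube d)
      = volume.restrict (Set.univ.pi fun _ : Fin d => Set.Ico (0:ℝ) 1) := by
  refine (Measure.restrict_congr_set ?_).symm
  apply ae_eq_of_subset_of_measure_ge
  · exact Set.pi_mono fun i _ => Set.Ico_subset_Icc_self
  · rw [unitCube, volume_pi_pi, volume_pi_pi]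
    simp [Real.volume_Icc, Real.volume_Ico]
  · exact (MeasurableSet.pi Set.countable_univ fun _ _ => measurableSet_Ico).nullMeasurableSet
  · rw [unitCube, volume_pi_pi]
    simp [Real.volume_Icc]

lemma det_transpose_inv {d : ℕ} (S : Matrix (Fin d) (Fin d) ℝ) :
    ((Sᵀ)⁻¹).det = (S.det)⁻¹ := by
  rw [Matrix.det_nonsing_inv, Matrix.det_transpose, Ring.inverse_eq_inv]

/-! #### Change of variables -/

lemma lint_cov (d : ℕ) {T : Matrix (Fin d) (Fin d) ℝ} (hT : T.det ≠ 0)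
    {g : (Fin d → ℝ) → ℝ≥0∞} (hg : Measurable g) :
    ∫⁻ x, g (T *ᵥ x) = ENNReal.ofReal |T.det⁻¹| * ∫⁻ x, g x := by
  have hL : Measurable (Matrix.toLin' T) :=
    (Matrix.toLin' T).continuous_of_finiteDimensional.measurable
  have hmap := Real.map_matrix_volume_pi_eq_smul_volume_pi hT
  have h1 : ∫⁻ y, g y ∂(Measure.map (Matrix.toLin' T) volume) = ∫⁻ x, g (T *ᵥ x) := by
    rw [lintegral_map hg hL]
    simp [Matrix.toLin'_apply]
  rw [← h1, hmap, lintegral_smul_measure, smul_eq_mul]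

lemma int_cov (d : ℕ) {T : Matrix (Fin d) (Fin d) ℝ} (hT : T.det ≠ 0)
    {f : (Fin d → ℝ) → ℝ} (hfm : Measurable f) (hf : Integrable f volume) :
    Integrable (fun x => f (T *ᵥ x)) volume ∧
    ∫ x, f (T *ᵥ x) = |T.det⁻¹| * ∫ x, f x := by
  have hL : Measurable (Matrix.toLin' T) :=
    (Matrix.toLin' T).continuous_of_finiteDimensional.measurable
  have hmap := Real.map_matrix_volume_pi_eq_smul_volume_pi hT
  have hint2 : Integrable f (Measure.map (Matrix.toLin' T) volume) := by
    rw [hmap]; exact hf.smul_measure ENNReal.ofReal_ne_top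
  constructor
  · have := (integrable_map_measure hfm.aestronglyMeasurable hL.aemeasurable).mp hint2
    simpa [Function.comp_def, Matrix.toLin'_apply] using this
  · have h1 : ∫ y, f y ∂(Measure.map (Matrix.toLin' T) volume) = ∫ x, f (T *ᵥ x) := by
      rw [integral_map hL.aemeasurable hfm.aestronglyMeasurable]
      simp [Matrix.toLin'_apply]
    rw [← h1, hmap, integral_smul_measure]
    rw [ENNReal.toReal_ofReal (abs_nonneg _), smul_eq_mul]

/-! #### Unfolding `ℝᵈ` along the lattice `ℤᵈ` -/

def latEquiv (d : ℕ) : (Fin d → ℤ) ≃ Submodule.span ℤ (Set.range ⇑(Pi.basisFun ℝ (Fin d))) :=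
  ((Pi.basisFun ℝ (Fin d)).restrictScalars ℤ).equivFun.toEquiv.symm

lemma latEquiv_coe (d : ℕ) (m : Fin d → ℤ) :
    ((latEquiv d m : Submodule.span ℤ (Set.range ⇑(Pi.basisFun ℝ (Fin d)))) : Fin d → ℝ)
      = zvec m := by
  classical
  have h : latEquiv d m = ((Pi.basisFun ℝ (Fin d)).restrictScalars ℤ).equivFun.symm m := rfl
  rw [h, Module.Basis.equivFun_symm_apply]
  push_cast
  funext j
  simp [Submodule.coe_sum, Module.Basis.restrictScalars_apply, zvec, Pi.basisFun_apply,
    Finset.sum_apply, Pi.single_apply]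

lemma fd_eq (d : ℕ) : ZSpan.fundamentalDomain (Pi.basisFun ℝ (Fin d)) =
    Set.univ.pi fun _ : Fin d => Set.Ico (0:ℝ) 1 := by
  ext x
  simp [ZSpan.fundamentalDomain, Set.mem_pi]

section lattice

variable (d : ℕ)

lemma lat_mvadd : MeasurableVAdd
    (↥(Submodule.span ℤ (Set.range ⇑(Pi.basisFun ℝ (Fin d))))) (Fin d → ℝ) := by
  refine { measurable_const_vadd := ?_, measurable_vadd_const := ?_ }
  · intro c
    have h : (fun x : Fin d → ℝ => c +ᵥ x) = fun x => (c : Fin d → ℝ) + x := rfl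
    rw [h]; exact measurable_const_add _
  · intro x
    have h : (fun c : ↥(Submodule.span ℤ (Set.range ⇑(Pi.basisFun ℝ (Fin d)))) => c +ᵥ x)
        = fun c : ↥(Submodule.span ℤ (Set.range ⇑(Pi.basisFun ℝ (Fin d)))) => (↑c + x) := rfl
    rw [h]; exact (measurable_subtype_coe).add_const _

lemma lat_vinv : VAddInvariantMeasure
    (↥(Submodule.span ℤ (Set.range ⇑(Pi.basisFun ℝ (Fin d))))) (Fin d → ℝ) volume := by
  constructor
  intro c s _
  have h : ((c +ᵥ ·) : (Fin d → ℝ) → (Fin d → ℝ)) = (fun x => (↑c : Fin d → ℝ) + x) := rfl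
  rw [h, measure_preimage_add]

lemma lint_lattice (g : (Fin d → ℝ) → ℝ≥0∞) :
    ∫⁻ x, g x = ∑' m : Fin d → ℤ,
      ∫⁻ v in Set.univ.pi fun _ : Fin d => Set.Ico (0:ℝ) 1, g (zvec m + v) := by
  haveI := lat_mvadd d
  haveI := lat_vinv d
  have hFD := ZSpan.isAddFundamentalDomain (Pi.basisFun ℝ (Fin d)) volume
  have h1 := hFD.lintegral_eq_tsum'' g
  rw [h1, ← ((latEquiv d).tsum_eq
    (fun γ => ∫⁻ v in ZSpan.fundamentalDomain (Pi.basisFun ℝ (Fin d)), g (γ +ᵥ v)))]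
  rw [fd_eq]
  refine tsum_congr fun m => ?_
  congr 1
  funext v
  congr 1
  rw [← latEquiv_coe d m]
  rfl

lemma int_lattice {f : (Fin d → ℝ) → ℝ} (hf : Integrable f volume) :
    ∫ x, f x = ∑' m : Fin d → ℤ,
      ∫ v in Set.univ.pi fun _ : Fin d => Set.Ico (0:ℝ) 1, f (zvec m + v) := by
  haveI := lat_mvadd d
  haveI := lat_vinv d
  haveI : Countable ↥(Submodule.span ℤ (Set.range ⇑(Pi.basisFun ℝ (Fin d)))) :=
    Countable.of_equiv _ (latEquiv d)
  have hFD := ZSpan.isAddFundamentalDomain (Pi.basisFun ℝ (Fin d)) volume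
  have h1 := hFD.integral_eq_tsum'' f hf
  rw [h1, ← ((latEquiv d).tsum_eq
    (fun γ => ∫ v in ZSpan.fundamentalDomain (Pi.basisFun ℝ (Fin d)), f (γ +ᵥ v)))]
  rw [fd_eq]
  refine tsum_congr fun m => ?_
  congr 1
  funext v
  congr 1
  rw [← latEquiv_coe d m]
  rfl

end lattice

/-! #### The cube-level identities -/

lemma cube_tsum_lintegral (d : ℕ) {S : Matrix (Fin d) (Fin d) ℝ} (hS : S.det ≠ 0)
    {g : (Fin d → ℝ) → ℝ≥0∞} (hg : Measurable g) :
    ∑' m : Fin d → ℤ, ∫⁻ v in unitCube d, g ((Sᵀ)⁻¹ *ᵥ (zvec m + v))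
      = ENNReal.ofReal |S.det| * ∫⁻ x, g x := by
  have hT : ((Sᵀ)⁻¹).det ≠ 0 := by rw [det_transpose_inv]; exact inv_ne_zero hS
  calc ∑' m : Fin d → ℤ, ∫⁻ v in unitCube d, g ((Sᵀ)⁻¹ *ᵥ (zvec m + v))
      = ∑' m : Fin d → ℤ, ∫⁻ v in Set.univ.pi fun _ : Fin d => Set.Ico (0:ℝ) 1,
          (fun x => g ((Sᵀ)⁻¹ *ᵥ x)) (zvec m + v) := by
        rw [restrict_unitCube_eq]
    _ = ∫⁻ x, g ((Sᵀ)⁻¹ *ᵥ x) := (lint_lattice d (fun x => g ((Sᵀ)⁻¹ *ᵥ x))).symm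
    _ = ENNReal.ofReal |S.det| * ∫⁻ x, g x := by
        rw [lint_cov d hT hg, det_transpose_inv, inv_inv]

lemma cube_lintegral_tsum (d : ℕ) {S : Matrix (Fin d) (Fin d) ℝ} (hS : S.det ≠ 0)
    {g : (Fin d → ℝ) → ℝ≥0∞} (hg : Measurable g) :
    ∫⁻ v in unitCube d, ∑' m : Fin d → ℤ, g ((Sᵀ)⁻¹ *ᵥ (zvec m + v))
      = ENNReal.ofReal |S.det| * ∫⁻ x, g x := by
  rw [lintegral_tsum (f := fun (m : Fin d → ℤ) (v : Fin d → ℝ) => g ((Sᵀ)⁻¹ *ᵥ (zvec m + v)))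
    (fun m => (hg.comp
      ((continuous_const.matrix_mulVec (continuous_const.add continuous_id)).measurable
        : Measurable fun v : Fin d → ℝ => (Sᵀ)⁻¹ *ᵥ (zvec m + v))).aemeasurable)]
  exact cube_tsum_lintegral d hS hg

lemma cube_integral_qrule (d : ℕ) {S : Matrix (Fin d) (Fin d) ℝ} (hS : S.det ≠ 0)
    {f : (Fin d → ℝ) → ℝ} (hfm : Measurable f) (hf : Integrable f volume) :
    ∫ v in unitCube d, Qrule S v f = ∫ x, f x := by
  have hT : ((Sᵀ)⁻¹).det ≠ 0 := by rw [det_transpose_inv]; exact inv_ne_zero hS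
  have habs : |S.det| ≠ 0 := abs_ne_zero.2 hS
  obtain ⟨hGint, hGeq⟩ := int_cov d hT hfm hf
  have hmv : ∀ m : Fin d → ℤ, Measurable fun v : Fin d → ℝ => (Sᵀ)⁻¹ *ᵥ (zvec m + v) :=
    fun m => (continuous_const.matrix_mulVec (continuous_const.add continuous_id)).measurable
  have hns : ∑' m : Fin d → ℤ,
      ∫⁻ v in unitCube d, ↑‖f ((Sᵀ)⁻¹ *ᵥ (zvec m + v))‖₊ ≠ ⊤ := by
    have := cube_tsum_lintegral d hS (g := fun x => (‖f x‖₊ : ℝ≥0∞)) hfm.nnnorm.coe_nnreal_ennreal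
    rw [this]
    exact ENNReal.mul_ne_top ENNReal.ofReal_ne_top hf.2.ne
  have hsw : ∫ v in unitCube d, ∑' m : Fin d → ℤ, f ((Sᵀ)⁻¹ *ᵥ (zvec m + v))
      = ∑' m : Fin d → ℤ, ∫ v in unitCube d, f ((Sᵀ)⁻¹ *ᵥ (zvec m + v)) :=
    integral_tsum (fun m => ((hfm.comp (hmv m)).aestronglyMeasurable)) hns
  have hlat : ∑' m : Fin d → ℤ, ∫ v in unitCube d, f ((Sᵀ)⁻¹ *ᵥ (zvec m + v))
      = ∫ x, f ((Sᵀ)⁻¹ *ᵥ x) := by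
    rw [show (fun x : Fin d → ℝ => f ((Sᵀ)⁻¹ *ᵥ x)) = fun x => f ((Sᵀ)⁻¹ *ᵥ x) from rfl] at hGint
    rw [int_lattice d hGint]
    refine tsum_congr fun m => ?_
    rw [restrict_unitCube_eq]
  calc ∫ v in unitCube d, Qrule S v f
      = |S.det|⁻¹ * ∫ v in unitCube d, ∑' m : Fin d → ℤ, f ((Sᵀ)⁻¹ *ᵥ (zvec m + v)) := by
        rw [← integral_const_mul]; rfl
    _ = |S.det|⁻¹ * (|S.det| * ∫ x, f x) := by
        rw [hsw, hlat, hGeq, det_transpose_inv, inv_inv]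
    _ = ∫ x, f x := by
        rw [← mul_assoc, inv_mul_cancel₀ habs, one_mul]

/-! #### Pointwise bound on the quadrature rule -/

lemma qrule_abs_le {d : ℕ} (S : Matrix (Fin d) (Fin d) ℝ) (v : Fin d → ℝ)
    (f : (Fin d → ℝ) → ℝ) :
    ENNReal.ofReal |Qrule S v f| ≤ ENNReal.ofReal |S.det|⁻¹
      * ∑' m : Fin d → ℤ, ENNReal.ofReal |f ((Sᵀ)⁻¹ *ᵥ (zvec m + v))| := by
  rw [Qrule, abs_mul, abs_of_nonneg (inv_nonneg.2 (abs_nonneg _)),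
    ENNReal.ofReal_mul (inv_nonneg.2 (abs_nonneg _))]
  refine mul_le_mul_right ?_ _
  by_cases hs : Summable fun m : Fin d → ℤ => f ((Sᵀ)⁻¹ *ᵥ (zvec m + v))
  · have habs : Summable fun m : Fin d → ℤ => |f ((Sᵀ)⁻¹ *ᵥ (zvec m + v))| := hs.abs
    calc ENNReal.ofReal |∑' m : Fin d → ℤ, f ((Sᵀ)⁻¹ *ᵥ (zvec m + v))|
        ≤ ENNReal.ofReal (∑' m : Fin d → ℤ, |f ((Sᵀ)⁻¹ *ᵥ (zvec m + v))|) := by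
          apply ENNReal.ofReal_le_ofReal
          have habs' : Summable fun m : Fin d → ℤ => ‖f ((Sᵀ)⁻¹ *ᵥ (zvec m + v))‖ := by
            simp only [Real.norm_eq_abs]; exact habs
          have h2 := norm_tsum_le_tsum_norm habs'
          simp only [Real.norm_eq_abs] at h2
          exact h2
      _ = ∑' m : Fin d → ℤ, ENNReal.ofReal |f ((Sᵀ)⁻¹ *ᵥ (zvec m + v))| :=
          ENNReal.ofReal_tsum_of_nonneg (fun _ => abs_nonneg _) habs
  · rw [tsum_eq_zero_of_not_summable hs]
    simp

end Aux

/-! #### Joint measurability in `(u, v)` -/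

section Joint

variable {d : ℕ} (a : ℝ) (B : Matrix (Fin d) (Fin d) ℝ)

lemma cont_MmatT : Continuous fun u : Fin d → ℝ => (Mmat a B u)ᵀ := by
  apply continuous_matrix
  intro i j
  have h : (fun u : Fin d → ℝ => (Mmat a B u)ᵀ i j) = fun u => a * (u j * B j i) := by
    funext u
    simp [Mmat, Matrix.transpose_apply, Matrix.smul_apply, Matrix.diagonal_mul, smul_eq_mul]
  rw [h]
  exact continuous_const.mul ((continuous_apply j).mul continuous_const)

lemma meas_detM : Measurable fun u : Fin d → ℝ => (Mmat a B u).det := by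
  have := (cont_MmatT a B).matrix_det.measurable
  simpa [Matrix.det_transpose] using this

lemma meas_TU_entry (i j : Fin d) :
    Measurable fun u : Fin d → ℝ => ((Mmat a B u)ᵀ)⁻¹ i j := by
  have hdet : Measurable fun u : Fin d → ℝ => (((Mmat a B u)ᵀ).det)⁻¹ :=
    ((cont_MmatT a B).matrix_det.measurable).inv
  have hadj : Measurable fun u : Fin d → ℝ => ((Mmat a B u)ᵀ).adjugate i j :=
    ((continuous_apply j).comp
      ((continuous_apply i).comp (cont_MmatT a B).matrix_adjugate)).measurable
  have h : (fun u : Fin d → ℝ => ((Mmat a B u)ᵀ)⁻¹ i j)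
      = fun u => (((Mmat a B u)ᵀ).det)⁻¹ * ((Mmat a B u)ᵀ).adjugate i j := by
    funext u
    rw [Matrix.inv_def, Ring.inverse_eq_inv, Matrix.smul_apply, smul_eq_mul]
  rw [h]
  exact hdet.mul hadj

lemma meas_phi (m : Fin d → ℤ) :
    Measurable fun p : (Fin d → ℝ) × (Fin d → ℝ) =>
      ((Mmat a B p.1)ᵀ)⁻¹ *ᵥ (zvec m + p.2) := by
  apply measurable_pi_lambda
  intro j
  have h : (fun p : (Fin d → ℝ) × (Fin d → ℝ) => (((Mmat a B p.1)ᵀ)⁻¹ *ᵥ (zvec m + p.2)) j)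
      = fun p => ∑ k, ((Mmat a B p.1)ᵀ)⁻¹ j k * ((m k : ℝ) + p.2 k) := by
    funext p
    simp [Matrix.mulVec, dotProduct, zvec]
  rw [h]
  refine Finset.measurable_sum _ fun k _ => ?_
  exact ((meas_TU_entry a B j k).comp measurable_fst).mul
    (measurable_const.add ((measurable_pi_apply k).comp measurable_snd))

lemma det_Mmat_ne (ha : 0 < a) (hB : IsUnit B.det) {u : Fin d → ℝ}
    (hu : ∀ j, u j ≠ 0) : (Mmat a B u).det ≠ 0 := by
  rw [Mmat, Matrix.det_smul, Matrix.det_mul, Matrix.det_diagonal]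
  exact mul_ne_zero (pow_ne_zero _ ha.ne')
    (mul_ne_zero (Finset.prod_ne_zero_iff.2 fun j _ => hu j) (isUnit_iff_ne_zero.mp hB))

end Joint

lemma uBox_coord_ne (d : ℕ) {u : Fin d → ℝ} (hu : u ∈ uBox d) : ∀ j, u j ≠ 0 := by
  intro j
  have := hu j (Set.mem_univ j)
  have h1 : (1:ℝ) ≤ u j := this.1
  linarith

lemma max_sub_max_neg (x : ℝ) : max x 0 - max (-x) 0 = x := by
  rcases le_total 0 x with h | h
  · rw [max_eq_left h, max_eq_right (neg_nonpos.2 h), sub_zero]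
  · rw [max_eq_right h, max_eq_left (neg_nonneg.2 h), zero_sub, neg_neg]

/-- Lemma 3: the randomized Frolov quadrature `M_{a,B}` is
well-defined and unbiased on `L¹(ℝᵈ)`. -/
theorem stmt2 (d : ℕ) (hd : 0 < d) (B : Matrix (Fin d) (Fin d) ℝ) (hB : IsFrolov B)
    (a : ℝ) (ha : 0 < a) (f : (Fin d → ℝ) → ℝ) (hf : Integrable f volume) :
    (∫⁻ p, ENNReal.ofReal |Qrule (Mmat a B p.1) p.2 f| ∂Pmeas d)
        ≤ ENNReal.ofReal (∫ x : Fin d → ℝ, |f x|) ∧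
    (∫ p, Qrule (Mmat a B p.1) p.2 f ∂Pmeas d) = ∫ x : Fin d → ℝ, f x := by
  classical
  obtain ⟨hU0, hUt⟩ := measure_uBox d hd
  haveI : IsProbabilityMeasure (unif (uBox d)) := unif_prob d hU0 hUt
  have hUmeas : MeasurableSet (uBox d) :=
    MeasurableSet.pi Set.countable_univ fun _ _ => measurableSet_Icc
  set f' : (Fin d → ℝ) → ℝ := hf.1.mk f with hf'def
  have hf'm : Measurable f' := hf.1.stronglyMeasurable_mk.measurable
  have hae : f =ᵐ[volume] f' := hf.1.ae_eq_mk
  have hf' : Integrable f' volume := hf.congr hae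
  have hdet_ne : ∀ u ∈ uBox d, (Mmat a B u).det ≠ 0 := fun u hu =>
    det_Mmat_ne a B ha hB.1 (uBox_coord_ne d hu)
  -- a.e. the first coordinate lies in `uBox`
  have haeU : ∀ᵐ u ∂(unif (uBox d)), u ∈ uBox d := by
    rw [unif]
    exact Measure.ae_smul_measure (ae_restrict_mem hUmeas) _
  have hfst : ∀ᵐ p ∂(Pmeas d), p.1 ∈ uBox d := by
    rw [Pmeas, ae_iff]
    have hset : {p : (Fin d → ℝ) × (Fin d → ℝ) | ¬ p.1 ∈ uBox d} = (uBox d)ᶜ ×ˢ Set.univ := by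
      ext p; simp
    rw [hset, Measure.prod_prod]
    have h0 : unif (uBox d) ((uBox d)ᶜ) = 0 := by
      rw [unif, Measure.smul_apply, Measure.restrict_apply hUmeas.compl, smul_eq_mul]
      simp
    rw [h0, zero_mul]
  -- `f` and `f'` agree at all quadrature nodes, a.e. in `(u, v)`
  have hcomp : ∀ᵐ p ∂(Pmeas d), ∀ m : Fin d → ℤ,
      f (((Mmat a B p.1)ᵀ)⁻¹ *ᵥ (zvec m + p.2))
        = f' (((Mmat a B p.1)ᵀ)⁻¹ *ᵥ (zvec m + p.2)) := by
    rw [ae_all_iff]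
    intro m
    set N := toMeasurable volume {x | f x ≠ f' x} with hN
    have hNmeas : MeasurableSet N := measurableSet_toMeasurable _ _
    have hN0 : volume N = 0 := by
      rw [hN, measure_toMeasurable]
      exact ae_iff.1 hae
    have hsub : {x | f x ≠ f' x} ⊆ N := subset_toMeasurable _ _
    have hmain : Pmeas d {p : (Fin d → ℝ) × (Fin d → ℝ) |
        ((Mmat a B p.1)ᵀ)⁻¹ *ᵥ (zvec m + p.2) ∈ N} = 0 := by
      have hAmeas : MeasurableSet {p : (Fin d → ℝ) × (Fin d → ℝ) |
          ((Mmat a B p.1)ᵀ)⁻¹ *ᵥ (zvec m + p.2) ∈ N} := meas_phi a B m hNmeas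
      rw [Pmeas, Measure.measure_prod_null hAmeas]
      filter_upwards [haeU] with u hu
      have hdet := hdet_ne u hu
      have hTdet : (((Mmat a B u)ᵀ)⁻¹).det ≠ 0 := by
        rw [det_transpose_inv]; exact inv_ne_zero hdet
      have hL : Measurable (Matrix.toLin' (((Mmat a B u)ᵀ)⁻¹)) :=
        (Matrix.toLin' (((Mmat a B u)ᵀ)⁻¹)).continuous_of_finiteDimensional.measurable
      have h2 : volume ((Matrix.toLin' (((Mmat a B u)ᵀ)⁻¹)) ⁻¹' N) = 0 := by
        have hmap := Real.map_matrix_volume_pi_eq_smul_volume_pi hTdet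
        have h3 := Measure.map_apply (μ := (volume : Measure (Fin d → ℝ))) hL hNmeas
        rw [hmap] at h3
        rw [← h3, Measure.smul_apply, hN0, smul_eq_mul, mul_zero]
      have hpre : volume ((fun v : Fin d → ℝ =>
          ((Mmat a B u)ᵀ)⁻¹ *ᵥ (zvec m + v)) ⁻¹' N) = 0 := by
        have h1 : (fun v : Fin d → ℝ => ((Mmat a B u)ᵀ)⁻¹ *ᵥ (zvec m + v))
            = (Matrix.toLin' (((Mmat a B u)ᵀ)⁻¹)) ∘ (fun v => zvec m + v) := by
          funext v; simp [Matrix.toLin'_apply]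
        rw [h1, Set.preimage_comp]
        have h4 := measure_preimage_add volume (zvec m)
          ((Matrix.toLin' (((Mmat a B u)ᵀ)⁻¹)) ⁻¹' N)
        rw [← h2]
        exact h4
      have hsec : (Prod.mk u ⁻¹' {p : (Fin d → ℝ) × (Fin d → ℝ) |
          ((Mmat a B p.1)ᵀ)⁻¹ *ᵥ (zvec m + p.2) ∈ N})
          = (fun v : Fin d → ℝ => ((Mmat a B u)ᵀ)⁻¹ *ᵥ (zvec m + v)) ⁻¹' N := rfl
      have hAm : MeasurableSet ((fun v : Fin d → ℝ =>
          ((Mmat a B u)ᵀ)⁻¹ *ᵥ (zvec m + v)) ⁻¹' N) :=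
        ((continuous_const.matrix_mulVec (continuous_const.add continuous_id)).measurable
          : Measurable fun v : Fin d → ℝ => ((Mmat a B u)ᵀ)⁻¹ *ᵥ (zvec m + v)) hNmeas
      show unif (unitCube d) _ = 0
      rw [hsec, unif_unitCube, Measure.restrict_apply hAm]
      exact measure_mono_null Set.inter_subset_left hpre
    refine measure_mono_null ?_ hmain
    intro p hp
    simp only [Set.mem_setOf_eq] at hp ⊢
    exact hsub (by simpa using hp)
  -- a.e. equality of the two quadrature processes
  have hQae : (fun p : (Fin d → ℝ) × (Fin d → ℝ) => Qrule (Mmat a B p.1) p.2 f)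
      =ᵐ[Pmeas d] fun p => Qrule (Mmat a B p.1) p.2 f' := by
    filter_upwards [hcomp] with p hp
    rw [Qrule, Qrule]
    congr 1
    exact tsum_congr fun m => hp m
  -- the measurable majorant
  set W : (Fin d → ℝ) × (Fin d → ℝ) → ℝ≥0∞ := fun p =>
    ENNReal.ofReal |(Mmat a B p.1).det|⁻¹ *
      ∑' m : Fin d → ℤ, ENNReal.ofReal |f' (((Mmat a B p.1)ᵀ)⁻¹ *ᵥ (zvec m + p.2))| with hWdef
  have hWmeas : Measurable W := by
    apply Measurable.mul
    · exact (((meas_detM a B).comp measurable_fst).abs.inv).ennreal_ofReal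
    · exact Measurable.ennreal_tsum fun m =>
        ((hf'm.comp (meas_phi a B m)).abs).ennreal_ofReal
  have hbound : ∀ p : (Fin d → ℝ) × (Fin d → ℝ),
      ENNReal.ofReal |Qrule (Mmat a B p.1) p.2 f'| ≤ W p := fun p =>
    qrule_abs_le (Mmat a B p.1) p.2 f'
  -- the lintegral of the majorant
  have habsae : (fun x => |f x|) =ᵐ[volume] fun x => |f' x| := hae.mono fun x hx => congrArg _ hx
  have hWint : ∫⁻ p, W p ∂(Pmeas d) = ENNReal.ofReal (∫ x, |f x|) := by
    rw [Pmeas, lintegral_prod _ hWmeas.aemeasurable]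
    have hinner : ∀ u ∈ uBox d,
        (∫⁻ v, W (u, v) ∂unif (unitCube d)) = ENNReal.ofReal (∫ x, |f x|) := by
      intro u hu
      have hdet := hdet_ne u hu
      rw [unif_unitCube]
      have hg : Measurable fun x : Fin d → ℝ => ENNReal.ofReal |f' x| :=
        hf'm.abs.ennreal_ofReal
      have htsmeas : Measurable fun v : Fin d → ℝ =>
          ∑' m : Fin d → ℤ, ENNReal.ofReal |f' (((Mmat a B u)ᵀ)⁻¹ *ᵥ (zvec m + v))| :=
        Measurable.ennreal_tsum fun m => (hf'm.comp
          ((continuous_const.matrix_mulVec (continuous_const.add continuous_id)).measurable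
            : Measurable fun v : Fin d → ℝ =>
              ((Mmat a B u)ᵀ)⁻¹ *ᵥ (zvec m + v))).abs.ennreal_ofReal
      calc ∫⁻ v in unitCube d, W (u, v)
          = ENNReal.ofReal |(Mmat a B u).det|⁻¹ *
              ∫⁻ v in unitCube d, ∑' m : Fin d → ℤ,
                ENNReal.ofReal |f' (((Mmat a B u)ᵀ)⁻¹ *ᵥ (zvec m + v))| := by
            simp only [hWdef]
            exact lintegral_const_mul _ htsmeas
        _ = ENNReal.ofReal |(Mmat a B u).det|⁻¹ *
              (ENNReal.ofReal |(Mmat a B u).det| * ∫⁻ x, ENNReal.ofReal |f' x|) := by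
            rw [cube_lintegral_tsum d hdet hg]
        _ = ∫⁻ x, ENNReal.ofReal |f' x| := by
            rw [← mul_assoc, ← ENNReal.ofReal_mul (inv_nonneg.2 (abs_nonneg _)),
              inv_mul_cancel₀ (abs_ne_zero.2 hdet), ENNReal.ofReal_one, one_mul]
        _ = ENNReal.ofReal (∫ x, |f' x|) :=
            (ofReal_integral_eq_lintegral_ofReal hf'.abs
              (Filter.Eventually.of_forall fun x => abs_nonneg _)).symm
        _ = ENNReal.ofReal (∫ x, |f x|) := by
            rw [integral_congr_ae habsae]
    calc ∫⁻ u, (∫⁻ v, W (u, v) ∂unif (unitCube d)) ∂unif (uBox d)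
        = ∫⁻ _, ENNReal.ofReal (∫ x, |f x|) ∂unif (uBox d) := by
          apply lintegral_congr_ae
          filter_upwards [haeU] with u hu
          exact hinner u hu
      _ = ENNReal.ofReal (∫ x, |f x|) := by
          rw [lintegral_const, measure_univ, mul_one]
  -- part 1
  have hpart1 : ∫⁻ p, ENNReal.ofReal |Qrule (Mmat a B p.1) p.2 f| ∂Pmeas d
      ≤ ENNReal.ofReal (∫ x, |f x|) := by
    have h1 : ∫⁻ p, ENNReal.ofReal |Qrule (Mmat a B p.1) p.2 f| ∂Pmeas d
        = ∫⁻ p, ENNReal.ofReal |Qrule (Mmat a B p.1) p.2 f'| ∂Pmeas d := by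
      apply lintegral_congr_ae
      filter_upwards [hQae] with p hp
      rw [hp]
    rw [h1, ← hWint]
    exact lintegral_mono hbound
  refine ⟨hpart1, ?_⟩
  -- part 2: integrability
  have hWfin : ∀ᵐ p ∂(Pmeas d), W p < ⊤ := by
    apply ae_lt_top hWmeas
    rw [hWint]
    exact ENNReal.ofReal_ne_top
  have hNae : ∀ᵐ p ∂(Pmeas d),
      Qrule (Mmat a B p.1) p.2 f' =
        |(Mmat a B p.1).det|⁻¹ *
          ((∑' m : Fin d → ℤ, ENNReal.ofReal
              (max (f' (((Mmat a B p.1)ᵀ)⁻¹ *ᵥ (zvec m + p.2))) 0)).toReal -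
            (∑' m : Fin d → ℤ, ENNReal.ofReal
              (max (-f' (((Mmat a B p.1)ᵀ)⁻¹ *ᵥ (zvec m + p.2))) 0)).toReal) := by
    filter_upwards [hWfin, hfst] with p hWp hup
    have hdet := hdet_ne p.1 hup
    set F : (Fin d → ℤ) → ℝ := fun m => f' (((Mmat a B p.1)ᵀ)⁻¹ *ᵥ (zvec m + p.2)) with hF
    have hc0 : ENNReal.ofReal |(Mmat a B p.1).det|⁻¹ ≠ 0 := by
      rw [ne_eq, ENNReal.ofReal_eq_zero, not_le]
      exact inv_pos.2 (abs_pos.2 hdet)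
    have hSfin : ∑' m : Fin d → ℤ, ENNReal.ofReal |F m| ≠ ⊤ := by
      intro htop
      rw [hWdef] at hWp
      simp only at hWp
      rw [htop, ENNReal.mul_top hc0] at hWp
      exact (lt_irrefl _ hWp).elim
    have habs : Summable fun m : Fin d → ℤ => |F m| := by
      have := ENNReal.summable_toReal hSfin
      simpa [ENNReal.toReal_ofReal (abs_nonneg _)] using this
    have hsum : Summable F := summable_abs_iff.mp habs
    have hgp : Summable fun m : Fin d → ℤ => max (F m) 0 :=
      habs.of_nonneg_of_le (fun m => le_max_right _ _)
        (fun m => max_le (le_abs_self _) (abs_nonneg _))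
    have hgm : Summable fun m : Fin d → ℤ => max (-F m) 0 :=
      habs.of_nonneg_of_le (fun m => le_max_right _ _)
        (fun m => max_le (neg_le_abs _) (abs_nonneg _))
    have htp : (∑' m : Fin d → ℤ, ENNReal.ofReal (max (F m) 0)).toReal
        = ∑' m : Fin d → ℤ, max (F m) 0 := by
      rw [← ENNReal.ofReal_tsum_of_nonneg (fun m => le_max_right _ _) hgp,
        ENNReal.toReal_ofReal (tsum_nonneg fun m => le_max_right _ _)]
    have htm : (∑' m : Fin d → ℤ, ENNReal.ofReal (max (-F m) 0)).toReal
        = ∑' m : Fin d → ℤ, max (-F m) 0 := by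
      rw [← ENNReal.ofReal_tsum_of_nonneg (fun m => le_max_right _ _) hgm,
        ENNReal.toReal_ofReal (tsum_nonneg fun m => le_max_right _ _)]
    rw [Qrule]
    rw [htp, htm, ← Summable.tsum_sub hgp hgm]
    congr 1
    exact tsum_congr fun m => (max_sub_max_neg (F m)).symm
  have hNmeas2 : Measurable fun p : (Fin d → ℝ) × (Fin d → ℝ) =>
      |(Mmat a B p.1).det|⁻¹ *
        ((∑' m : Fin d → ℤ, ENNReal.ofReal
            (max (f' (((Mmat a B p.1)ᵀ)⁻¹ *ᵥ (zvec m + p.2))) 0)).toReal -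
          (∑' m : Fin d → ℤ, ENNReal.ofReal
            (max (-f' (((Mmat a B p.1)ᵀ)⁻¹ *ᵥ (zvec m + p.2))) 0)).toReal) := by
    refine Measurable.mul ?_ (Measurable.sub ?_ ?_)
    · exact ((meas_detM a B).comp measurable_fst).abs.inv
    · exact ENNReal.measurable_toReal.comp (Measurable.ennreal_tsum fun m =>
        (((hf'm.comp (meas_phi a B m)).max measurable_const)).ennreal_ofReal)
    · exact ENNReal.measurable_toReal.comp (Measurable.ennreal_tsum fun m =>
        ((((hf'm.comp (meas_phi a B m)).neg).max measurable_const)).ennreal_ofReal)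
  have hQSM : AEStronglyMeasurable
      (fun p : (Fin d → ℝ) × (Fin d → ℝ) => Qrule (Mmat a B p.1) p.2 f') (Pmeas d) :=
    hNmeas2.aestronglyMeasurable.congr (hNae.mono fun p hp => hp.symm)
  have hQint : Integrable
      (fun p : (Fin d → ℝ) × (Fin d → ℝ) => Qrule (Mmat a B p.1) p.2 f') (Pmeas d) := by
    refine ⟨hQSM, ?_⟩
    show (∫⁻ p, (‖Qrule (Mmat a B p.1) p.2 f'‖₊ : ℝ≥0∞) ∂Pmeas d) < ⊤
    calc ∫⁻ p, ↑‖Qrule (Mmat a B p.1) p.2 f'‖₊ ∂Pmeas d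
        = ∫⁻ p, ENNReal.ofReal |Qrule (Mmat a B p.1) p.2 f'| ∂Pmeas d := by
          exact lintegral_congr fun p => Real.enorm_eq_ofReal_abs _
      _ ≤ ∫⁻ p, W p ∂Pmeas d := lintegral_mono hbound
      _ < ⊤ := by rw [hWint]; exact ENNReal.ofReal_lt_top
  -- part 2: Fubini and the inner identity
  have h2 : ∫ p, Qrule (Mmat a B p.1) p.2 f ∂Pmeas d
      = ∫ p, Qrule (Mmat a B p.1) p.2 f' ∂Pmeas d := integral_congr_ae hQae
  rw [h2, Pmeas, integral_prod _ hQint]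
  have hinner2 : ∀ᵐ u ∂(unif (uBox d)),
      (∫ v, Qrule (Mmat a B u) v f' ∂unif (unitCube d)) = ∫ x, f' x := by
    filter_upwards [haeU] with u hu
    rw [unif_unitCube]
    exact cube_integral_qrule d (hdet_ne u hu) hf'm hf'
  rw [integral_congr_ae hinner2, integral_const, probReal_univ, one_smul]
  exact (integral_congr_ae hae).symm
end
end

section
/- For any Frolov matrix B ∈ ℝ^{d×d} and any s ∈ ℕ with s > d/2 there is a constant c > 0 such that for every a > 0 and every f ∈ H̊^s(ℝ^d), ∫_{D_a} |f̂(x)| dx ≤ c · a^{−s+d/2} · ‖f‖_{H^s(ℝ^d)}. -/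
open MeasureTheory Matrix Real Set
noncomputable section

section Stmt7Aux

open scoped ENNReal

private lemma stmt7_vwt_cont (d s : ℕ) : Continuous (vwt d s) := by
  unfold vwt
  exact continuous_finset_sum _ fun α _ => continuous_finset_prod _ fun j _ => by fun_prop

private lemma stmt7_one_le_vwt (d s : ℕ) (x : Fin d → ℝ) : 1 ≤ vwt d s x := by
  have h0 : (0 : Fin d → ℕ) ∈ isoIdx d s := by
    simp [isoIdx, Fintype.mem_piFinset]
  have := Finset.single_le_sum (f := fun α => ∏ j, |2 * π * x j| ^ (2 * α j))
    (fun α _ => Finset.prod_nonneg fun j _ => pow_nonneg (abs_nonneg _) _) h0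
  simpa [vwt] using this

private lemma stmt7_vwt_ge_coord (d s : ℕ) (x : Fin d → ℝ) (j₀ : Fin d) :
    |2 * π * x j₀| ^ (2 * s) ≤ vwt d s x := by
  classical
  set α : Fin d → ℕ := fun j => if j = j₀ then s else 0 with hα
  have hmem : α ∈ isoIdx d s := by
    simp only [isoIdx, Finset.mem_filter, Fintype.mem_piFinset, Finset.mem_range, hα]
    constructor
    · intro j; by_cases h : j = j₀ <;> simp [h]
    · simp
  have hprod : ∏ j, |2 * π * x j| ^ (2 * α j) = |2 * π * x j₀| ^ (2 * s) := by
    rw [Finset.prod_eq_single j₀]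
    · simp [hα]
    · intro b _ hb; simp [hα, hb]
    · simp
  calc |2 * π * x j₀| ^ (2 * s) = ∏ j, |2 * π * x j| ^ (2 * α j) := hprod.symm
    _ ≤ vwt d s x := Finset.single_le_sum (f := fun α => ∏ j, |2 * π * x j| ^ (2 * α j))
        (fun α _ => Finset.prod_nonneg fun j _ => pow_nonneg (abs_nonneg _) _) hmem

private lemma stmt7_vwt_ge_norm (d s : ℕ) (hd : 0 < d) (x : Fin d → ℝ) :
    (2 * π * ‖x‖) ^ (2 * s) ≤ vwt d s x := by
  have : Finset.Nonempty (Finset.univ : Finset (Fin d)) := by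
    simpa [Finset.univ_nonempty_iff] using Fin.pos_iff_nonempty.mp hd
  obtain ⟨j₀, -, hj₀⟩ := Finset.exists_mem_eq_sup Finset.univ this (fun i => ‖x i‖₊)
  have hnorm : ‖x‖ = |x j₀| := by
    rw [Pi.norm_def, hj₀]; simp [Real.norm_eq_abs]
  have h2 : (2 * π * ‖x‖) ^ (2 * s) = |2 * π * x j₀| ^ (2 * s) := by
    rw [hnorm, abs_mul]
    congr 2
    rw [abs_of_pos (by positivity)]
  rw [h2]; exact stmt7_vwt_ge_coord d s x j₀

private lemma stmt7_norm_ge_of_mem_Da {d : ℕ} (hd : 0 < d) {a : ℝ} {x : Fin d → ℝ}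
    (hx : a ^ d ≤ ∏ j, |x j|) : a ≤ ‖x‖ := by
  have h1 : ∏ j, |x j| ≤ ‖x‖ ^ d := by
    calc ∏ j, |x j| ≤ ∏ _j : Fin d, ‖x‖ :=
          Finset.prod_le_prod (fun j _ => abs_nonneg _)
            (fun j _ => by simpa [Real.norm_eq_abs] using norm_le_pi_norm x j)
      _ = ‖x‖ ^ d := by simp
  exact le_of_pow_le_pow_left₀ hd.ne' (norm_nonneg _) (hx.trans h1)

private lemma stmt7_dyadic (t : ℝ) (ht : 1 ≤ t) : ∃ k : ℕ, (2:ℝ)^k ≤ t ∧ t < 2^(k+1) := by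
  obtain ⟨n, hn⟩ := pow_unbounded_of_one_lt t (one_lt_two (α := ℝ))
  have hP : ∃ k, t < (2:ℝ)^(k+1) := ⟨n, hn.trans_le (by
    apply pow_le_pow_right₀ one_le_two; omega)⟩
  classical
  refine ⟨Nat.find hP, ?_, Nat.find_spec hP⟩
  rcases Nat.eq_zero_or_pos (Nat.find hP) with h0 | h0
  · rw [h0]; simpa using ht
  · have := Nat.find_min hP (m := Nat.find hP - 1) (by omega)
    push_neg at this
    calc (2:ℝ)^(Nat.find hP) = 2 ^ (Nat.find hP - 1 + 1) := by congr 1; omega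
      _ ≤ t := this

private lemma stmt7_key (d s : ℕ) (hd : 0 < d) (hs : d < 2*s) :
    ∃ K : ℝ, 0 < K ∧ ∀ a : ℝ, 0 < a →
      ∫⁻ x in Da d a, (ENNReal.ofReal (vwt d s x))⁻¹
        ≤ ENNReal.ofReal (K * (a^d / a^(2*s))) := by
  have hπ : (0:ℝ) < π := pi_pos
  set r : ℝ := 2^d / 2^(2*s) with hr
  have hr0 : 0 ≤ r := by positivity
  have hr1 : r < 1 := by
    rw [hr, div_lt_one (by positivity)]
    exact pow_lt_pow_right₀ one_lt_two hs
  set K₀ : ℝ := ((2*π)^(2*s))⁻¹ * 4^d with hK₀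
  have hK₀0 : 0 < K₀ := by positivity
  refine ⟨K₀ * (1-r)⁻¹, mul_pos hK₀0 (inv_pos.mpr (by linarith)), ?_⟩
  intro a ha
  set A : ℕ → Set (Fin d → ℝ) := fun k => {x | a*2^k ≤ ‖x‖ ∧ ‖x‖ < a*2^(k+1)} with hA
  have hsub : Da d a ⊆ ⋃ k, A k := by
    intro x hx
    have hax : a ≤ ‖x‖ := stmt7_norm_ge_of_mem_Da hd hx
    obtain ⟨k, hk1, hk2⟩ := stmt7_dyadic (‖x‖ / a) ((one_le_div ha).mpr hax)
    exact Set.mem_iUnion.mpr ⟨k, by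
      constructor
      · rw [mul_comm]; exact (le_div_iff₀ ha).mp hk1
      · rw [mul_comm]; exact (div_lt_iff₀ ha).mp hk2⟩
  have hterm : ∀ k : ℕ, ∫⁻ x in A k, (ENNReal.ofReal (vwt d s x))⁻¹
      ≤ ENNReal.ofReal ((K₀ * (a^d / a^(2*s))) * r^k) := by
    intro k
    set P : ℝ := (2*π*(a*2^k))^(2*s) with hP
    have hPpos : 0 < P := by positivity
    calc ∫⁻ x in A k, (ENNReal.ofReal (vwt d s x))⁻¹
        ≤ ∫⁻ _x in A k, ENNReal.ofReal P⁻¹ := by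
          apply setLIntegral_mono measurable_const
          intro x hx
          rw [ENNReal.ofReal_inv_of_pos hPpos]
          apply ENNReal.inv_le_inv'
          apply ENNReal.ofReal_le_ofReal
          calc P ≤ (2*π*‖x‖)^(2*s) := by
                apply pow_le_pow_left₀ (by positivity)
                nlinarith [hx.1]
            _ ≤ vwt d s x := stmt7_vwt_ge_norm d s hd x
      _ = ENNReal.ofReal P⁻¹ * volume (A k) := setLIntegral_const _ _
      _ ≤ ENNReal.ofReal P⁻¹ * ENNReal.ofReal (2*(a*2^(k+1)))^d := by
          apply mul_le_mul_right
          have hb : A k ⊆ Metric.ball (0 : Fin d → ℝ) (a*2^(k+1)) := by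
            intro x hx; rw [mem_ball_zero_iff]; exact hx.2
          refine (measure_mono hb).trans_eq ?_
          rw [ball_pi _ (by positivity), volume_pi_pi]
          simp only [Real.volume_ball, Finset.prod_const, Finset.card_univ, Fintype.card_fin]
      _ = ENNReal.ofReal (P⁻¹ * (2*(a*2^(k+1)))^d) := by
          rw [ENNReal.ofReal_mul (p := P⁻¹) (by positivity), ENNReal.ofReal_pow (by positivity)]
      _ = ENNReal.ofReal ((K₀ * (a^d / a^(2*s))) * r^k) := by
          congr 1
          rw [hP, hK₀, hr]
          field_simp
          ring_nf
          have h2 : (2:ℝ)⁻¹ ^ (k*s*2) * 2^(k*s*2) = 1 := by rw [← mul_pow]; norm_num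
          linear_combination (-(a ^ d * a ^ (s * 2) * π ^ (s * 2) * 2 ^ (k * d) * 2 ^ (s * 2) * 4 ^ d)) * h2
  calc ∫⁻ x in Da d a, (ENNReal.ofReal (vwt d s x))⁻¹
      ≤ ∫⁻ x in ⋃ k, A k, (ENNReal.ofReal (vwt d s x))⁻¹ := lintegral_mono_set hsub
    _ ≤ ∑' k, ∫⁻ x in A k, (ENNReal.ofReal (vwt d s x))⁻¹ := lintegral_iUnion_le _ _
    _ ≤ ∑' k, ENNReal.ofReal ((K₀ * (a^d / a^(2*s))) * r^k) := ENNReal.tsum_le_tsum hterm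
    _ = ENNReal.ofReal ((K₀ * (a^d / a^(2*s))) * (1-r)⁻¹) := by
        have h1 : ∀ k : ℕ, ENNReal.ofReal ((K₀ * (a^d / a^(2*s))) * r^k)
            = ENNReal.ofReal (K₀ * (a^d / a^(2*s))) * ENNReal.ofReal r ^ k := by
          intro k
          rw [ENNReal.ofReal_mul (by positivity), ENNReal.ofReal_pow hr0]
        simp_rw [h1]
        rw [ENNReal.tsum_mul_left, ENNReal.tsum_geometric]
        have h2 : (1 : ENNReal) - ENNReal.ofReal r = ENNReal.ofReal (1 - r) := by
          rw [← ENNReal.ofReal_one, ← ENNReal.ofReal_sub _ hr0]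
        rw [h2, ← ENNReal.ofReal_inv_of_pos (by linarith), ← ENNReal.ofReal_mul (by positivity)]
    _ = ENNReal.ofReal ((K₀ * (1-r)⁻¹) * (a^d / a^(2*s))) := by rw [mul_right_comm]

private lemma stmt7_ft_meas {d : ℕ} (f : (Fin d → ℝ) → ℝ) (hf : Continuous f) :
    Measurable (ft f) := by
  have hF : Continuous (fun p : (Fin d → ℝ) × (Fin d → ℝ) =>
      (f p.2 : ℂ) * Complex.exp (-2 * (π : ℂ) * Complex.I * ((∑ j, p.2 j * p.1 j : ℝ) : ℂ))) := by
    fun_prop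
  exact (hF.stronglyMeasurable.integral_prod_right' (ν := volume)).measurable

private lemma stmt7_main (d s : ℕ)
    (g v : (Fin d → ℝ) → ℝ) (hgm : Measurable g) (hvm : Measurable v)
    (hg0 : ∀ x, 0 ≤ g x) (hv1 : ∀ x, 1 ≤ v x)
    (hInt : Integrable (fun x => g x ^ 2 * v x))
    (N : ℝ) (hN0 : 0 ≤ N) (hN : ∫ x, g x ^ 2 * v x = N ^ 2)
    (K : ℝ) (hK : 0 < K) (a : ℝ) (ha : 0 < a)
    (hKa : ∫⁻ x in Da d a, (ENNReal.ofReal (v x))⁻¹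
        ≤ ENNReal.ofReal (K * (a^d / a^(2*s)))) :
    (∫⁻ x in Da d a, ENNReal.ofReal (g x))
      ≤ ENNReal.ofReal (Real.sqrt K * a ^ (-(s : ℝ) + d / 2) * N) := by
  set μ := volume.restrict (Da d a) with hμ
  set φ : (Fin d → ℝ) → ℝ≥0∞ := fun x => ENNReal.ofReal (g x) * ENNReal.ofReal (v x) ^ ((1:ℝ)/2) with hφ
  set ψ : (Fin d → ℝ) → ℝ≥0∞ := fun x => ENNReal.ofReal (v x) ^ (-((1:ℝ)/2)) with hψ
  have hVne0 : ∀ x, ENNReal.ofReal (v x) ≠ 0 := fun x => by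
    simp [ENNReal.ofReal_eq_zero]; linarith [hv1 x]
  have hVnetop : ∀ x, ENNReal.ofReal (v x) ≠ ⊤ := fun x => ENNReal.ofReal_ne_top
  have hφm : AEMeasurable φ μ := by
    exact (hgm.ennreal_ofReal.mul
      ((ENNReal.continuous_rpow_const.measurable).comp hvm.ennreal_ofReal)).aemeasurable
  have hψm : AEMeasurable ψ μ := by
    exact ((ENNReal.continuous_rpow_const.measurable).comp hvm.ennreal_ofReal).aemeasurable
  have hpq : Real.HolderConjugate 2 2 := Real.HolderConjugate.two_two
  have holder := ENNReal.lintegral_mul_le_Lp_mul_Lq μ hpq hφm hψm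
  have h1 : ∀ x, φ x * ψ x = ENNReal.ofReal (g x) := by
    intro x
    rw [hφ, hψ]
    simp only
    rw [mul_assoc, ← ENNReal.rpow_add _ _ (hVne0 x) (hVnetop x)]
    norm_num
  have h2 : ∀ x, φ x ^ (2:ℝ) = ENNReal.ofReal (g x ^ 2 * v x) := by
    intro x
    rw [hφ]
    simp only
    rw [ENNReal.mul_rpow_of_nonneg _ _ (by norm_num : (0:ℝ) ≤ 2),
      ← ENNReal.rpow_mul, ENNReal.ofReal_rpow_of_nonneg (hg0 x) (by norm_num),
      (by norm_num : ((1:ℝ)/2) * 2 = 1), ENNReal.rpow_one,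
      ← ENNReal.ofReal_mul (Real.rpow_nonneg (hg0 x) _)]
    congr 1
    rw [← Real.rpow_natCast (g x) 2]
    norm_num
  have h3 : ∀ x, ψ x ^ (2:ℝ) = (ENNReal.ofReal (v x))⁻¹ := by
    intro x
    rw [hψ]
    simp only
    rw [← ENNReal.rpow_mul, (by norm_num : -((1:ℝ)/2) * 2 = -1), ENNReal.rpow_neg_one]
  have lhs_eq : ∫⁻ x, (φ * ψ) x ∂μ = ∫⁻ x in Da d a, ENNReal.ofReal (g x) := by
    rw [hμ]
    exact lintegral_congr fun x => by rw [Pi.mul_apply, h1 x]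
  have hA : ∫⁻ x, φ x ^ (2:ℝ) ∂μ ≤ ENNReal.ofReal (N ^ 2) := by
    calc ∫⁻ x, φ x ^ (2:ℝ) ∂μ = ∫⁻ x in Da d a, ENNReal.ofReal (g x ^ 2 * v x) := by
          rw [hμ]; exact lintegral_congr fun x => h2 x
      _ ≤ ∫⁻ x, ENNReal.ofReal (g x ^ 2 * v x) := setLIntegral_le_lintegral _ _
      _ = ENNReal.ofReal (∫ x, g x ^ 2 * v x) := by
          rw [ofReal_integral_eq_lintegral_ofReal hInt
            (Filter.Eventually.of_forall fun x => mul_nonneg (by positivity) (by linarith [hv1 x]))]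
      _ = ENNReal.ofReal (N ^ 2) := by rw [hN]
  have hB : ∫⁻ x, ψ x ^ (2:ℝ) ∂μ ≤ ENNReal.ofReal (K * (a^d / a^(2*s))) := by
    calc ∫⁻ x, ψ x ^ (2:ℝ) ∂μ = ∫⁻ x in Da d a, (ENNReal.ofReal (v x))⁻¹ := by
          rw [hμ]; exact lintegral_congr fun x => h3 x
      _ ≤ _ := hKa
  have hfinal := holder.trans (mul_le_mul'
    (ENNReal.rpow_le_rpow hA (by norm_num : (0:ℝ) ≤ 1/2))
    (ENNReal.rpow_le_rpow hB (by norm_num : (0:ℝ) ≤ 1/2)))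
  rw [lhs_eq] at hfinal
  refine hfinal.trans (le_of_eq ?_)
  rw [ENNReal.ofReal_rpow_of_nonneg (by positivity) (by norm_num),
    ENNReal.ofReal_rpow_of_nonneg (by positivity) (by norm_num),
    ← ENNReal.ofReal_mul (by positivity)]
  congr 1
  have e1 : (N ^ 2 : ℝ) ^ ((1:ℝ)/2) = N := by
    rw [← Real.rpow_natCast N 2, ← Real.rpow_mul hN0]
    norm_num
  have e2 : (a:ℝ)^d / a^(2*s) = a ^ ((d:ℝ) - 2*s) := by
    rw [← Real.rpow_natCast a d, ← Real.rpow_natCast a (2*s), ← Real.rpow_sub ha]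
    push_cast; ring_nf
  have e3 : (K * (a^d / a^(2*s))) ^ ((1:ℝ)/2)
      = Real.sqrt K * a ^ (-(s : ℝ) + d / 2) := by
    rw [e2, Real.mul_rpow hK.le (Real.rpow_nonneg ha.le _), ← Real.rpow_mul ha.le,
      Real.sqrt_eq_rpow]
    congr 1
    push_cast; ring
  rw [e1, e3]
  ring

end Stmt7Aux

/-- Lemma 5: for a Frolov matrix `B` and `s ∈ ℕ` with `s > d/2` there
is `c > 0` with `∫_{D_a} |f̂(x)| dx ≤ c a^{-s+d/2} ‖f‖_{H^s(ℝᵈ)}` for every `a > 0`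
and every `f ∈ H̊^s(ℝᵈ)`. -/
theorem stmt7 (d s : ℕ) (hd : 0 < d) (hs : d < 2 * s)
    (B : Matrix (Fin d) (Fin d) ℝ) (hB : IsFrolov B) :
    ∃ c : ℝ, 0 < c ∧ ∀ a : ℝ, 0 < a →
      ∀ f : (Fin d → ℝ) → ℝ, Continuous f → HasCompactSupport f →
      Integrable (fun x : Fin d → ℝ => ‖ft f x‖ ^ 2 * vwt d s x) →
      (∫⁻ x in Da d a, ENNReal.ofReal ‖ft f x‖)
        ≤ ENNReal.ofReal (c * a ^ (-(s : ℝ) + d / 2) * isoNormF d s f) := by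
  obtain ⟨K, hK, hKa⟩ := stmt7_key d s hd hs
  refine ⟨Real.sqrt K, Real.sqrt_pos.mpr hK, ?_⟩
  intro a ha f hfc hcs hInt
  have hvm : Measurable (vwt d s) := (stmt7_vwt_cont d s).measurable
  have hgm : Measurable (fun x => ‖ft f x‖) := (stmt7_ft_meas f hfc).norm
  have hnonneg : 0 ≤ ∫ x, ‖ft f x‖ ^ 2 * vwt d s x :=
    integral_nonneg fun x => mul_nonneg (by positivity)
      (by linarith [stmt7_one_le_vwt d s x])
  have hN : ∫ x, ‖ft f x‖ ^ 2 * vwt d s x = isoNormF d s f ^ 2 := by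
    rw [isoNormF, Real.sq_sqrt hnonneg]
  exact stmt7_main d s (fun x => ‖ft f x‖) (vwt d s) hgm hvm (fun x => norm_nonneg _)
    (stmt7_one_le_vwt d s) hInt (isoNormF d s f) (Real.sqrt_nonneg _) hN
    K hK a ha (hKa a ha)
end
end
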